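/- For 1 < p < q, the normalized incomplete beta ratio satisfies 1 < I_q(y)/I_p(y) < π_p/π_q for all y ∈ (0,1), where I_p(y) = (2/π_p)∫₀^y (1−t^p)^{-1/p} dt and π_p = 2π/(p sin(π/p)). -/

import Mathlib

/-!
The upper bound says `∫₀^y (1 - t^q)^(-1/q) < ∫₀^y (1 - t^p)^(-1/p)`, which holds pointwise.
The lower bound says that, relative to its total mass `π_q / 2`, the weight `(1 - t^q)^(-1/q)`
puts more mass on `[0, y]` than `(1 - t^p)^(-1/p)` does. This follows because the ratio of the two
weights is strictly decreasing on `[0, 1)`: its logarithm `log (1 - t^p) / p - log (1 - t^q) / q`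
has derivative `t^(q-1)/(1 - t^q) - t^(p-1)/(1 - t^p) < 0`. The total mass is computed by the
substitution `u = t^p`, which turns it into the Beta integral `B(1/p, 1 - 1/p) / p`, and the
reflection formula `Γ(s) Γ(1 - s) = π / sin (π s)`.
-/

open Real

noncomputable def pip (p : ℝ) : ℝ := 2 * π / (p * Real.sin (π / p))

noncomputable def Ip (p y : ℝ) : ℝ :=
  (2 / pip p) * ∫ t in (0:ℝ)..y, (1 - t ^ p) ^ (-1 / p)

open MeasureTheory Set

theorem integral_rpow_mul_one_sub_rpow {α β : ℝ} (hα : 0 < α) (hβ : 0 < β) :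
    ∫ x in (0:ℝ)..1, x ^ (α - 1) * (1 - x) ^ (β - 1) = ProbabilityTheory.beta α β := by
  have hcomplex : Complex.betaIntegral α β =
      ((∫ x in (0:ℝ)..1, x ^ (α - 1) * (1 - x) ^ (β - 1) : ℝ) : ℂ) := by
    rw [Complex.betaIntegral, ← intervalIntegral.integral_ofReal]
    refine intervalIntegral.integral_congr fun x hx => ?_
    rw [uIcc_of_le zero_le_one] at hx
    simp only [Complex.ofReal_mul, Complex.ofReal_cpow hx.1,
      Complex.ofReal_cpow (sub_nonneg.2 hx.2), Complex.ofReal_sub, Complex.ofReal_one]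
  rw [ProbabilityTheory.beta_eq_betaIntegralReal α β hα hβ, hcomplex, Complex.ofReal_re]

theorem integral_rpow_mul_one_sub_rpow_neg {s : ℝ} (hs0 : 0 < s) (hs1 : s < 1) :
    ∫ x in (0:ℝ)..1, x ^ (s - 1) * (1 - x) ^ (-s) = π / sin (π * s) := by
  have h := integral_rpow_mul_one_sub_rpow hs0 (sub_pos.2 hs1)
  rw [sub_sub_cancel_left] at h
  rw [h, ProbabilityTheory.beta, add_sub_cancel, Real.Gamma_one, div_one,
    Real.Gamma_mul_Gamma_one_sub]

theorem integral_comp_rpow_Ioo_zero_one {E : Type*} [NormedAddCommGroup E] [NormedSpace ℝ E]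
    (g : ℝ → E) {p : ℝ} (hp : 0 < p) :
    ∫ x in Ioo (0:ℝ) 1, (p * x ^ (p - 1)) • g (x ^ p) = ∫ y in Ioo (0:ℝ) 1, g y := by
  have himage : (· ^ p) '' Ioo (0:ℝ) 1 = Ioo 0 1 := by
    have := (Real.continuous_rpow_const hp.le).continuousOn.image_Ioo_of_strictMonoOn
      (zero_le_one : (0:ℝ) ≤ 1)
      ((strictMonoOn_rpow_Ici_of_exponent_pos hp).mono Icc_subset_Ici_self)
    simpa [zero_rpow hp.ne'] using this
  have hsubst := integral_image_eq_integral_abs_deriv_smul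
    (measurableSet_Ioo (a := (0:ℝ)) (b := 1))
    (fun x hx => (hasDerivAt_rpow_const (Or.inl hx.1.ne')).hasDerivWithinAt)
    ((rpow_left_injOn hp.ne').mono fun x hx => hx.1.le) g
  rw [himage] at hsubst
  rw [hsubst]
  refine setIntegral_congr_fun measurableSet_Ioo fun x hx => ?_
  rw [abs_of_pos (mul_pos hp (rpow_pos_of_pos hx.1 _))]

open intervalIntegral in
theorem integral_mul_integral_lt_of_strictAntiOn_div {f g : ℝ → ℝ} {a y b : ℝ}
    (hay : a < y) (hyb : y < b) (hf : IntervalIntegrable f volume a b)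
    (hg : IntervalIntegrable g volume a b) (hf_pos : ∀ t ∈ Ioo a b, 0 < f t)
    (hgf : StrictAntiOn (fun t => g t / f t) (Ioo a b)) :
    (∫ t in a..b, g t) * (∫ t in a..y, f t) < (∫ t in a..b, f t) * (∫ t in a..y, g t) := by
  have hy : y ∈ uIcc a b := mem_uIcc_of_le hay.le hyb.le
  have hleft : uIcc a y ⊆ uIcc a b := uIcc_subset_uIcc left_mem_uIcc hy
  have hright : uIcc y b ⊆ uIcc a b := uIcc_subset_uIcc hy right_mem_uIcc
  have hf₁ := hf.mono_set hleft
  have hf₂ := hf.mono_set hright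
  have hg₁ := hg.mono_set hleft
  have hg₂ := hg.mono_set hright
  set r := g y / f y
  have hy' : y ∈ Ioo a b := ⟨hay, hyb⟩
  have h_left : r * ∫ t in a..y, f t < ∫ t in a..y, g t := by
    rw [← intervalIntegral.integral_const_mul, ← sub_pos,
      ← integral_sub hg₁ (hf₁.const_mul r)]
    refine intervalIntegral_pos_of_pos_on (hg₁.sub (hf₁.const_mul r)) (fun t ht => ?_) hay
    have ht' : t ∈ Ioo a b := ⟨ht.1, ht.2.trans hyb⟩
    rw [sub_pos, ← lt_div_iff₀ (hf_pos t ht')]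
    exact hgf ht' hy' ht.2
  have h_right : ∫ t in y..b, g t ≤ r * ∫ t in y..b, f t := by
    rw [← intervalIntegral.integral_const_mul]
    refine integral_mono_on_of_le_Ioo hyb.le hg₂ (hf₂.const_mul r) fun t ht => ?_
    have ht' : t ∈ Ioo a b := ⟨hay.trans ht.1, ht.2⟩
    rw [← div_le_iff₀ (hf_pos t ht')]
    exact (hgf hy' ht' ht.1).le
  have hA : 0 < ∫ t in a..y, f t :=
    intervalIntegral_pos_of_pos_on hf₁ (fun t ht => hf_pos t ⟨ht.1, ht.2.trans hyb⟩) hay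
  have hB : 0 < ∫ t in y..b, f t :=
    intervalIntegral_pos_of_pos_on hf₂ (fun t ht => hf_pos t ⟨hay.trans ht.1, ht.2⟩) hyb
  rw [← integral_add_adjacent_intervals hf₁ hf₂,
    ← integral_add_adjacent_intervals hg₁ hg₂]
  nlinarith [mul_lt_mul_of_pos_right h_left hB, mul_le_mul_of_nonneg_right h_right hA.le]

noncomputable def pWeight (p t : ℝ) : ℝ := (1 - t ^ p) ^ (-1 / p)

theorem one_sub_rpow_pos {p t : ℝ} (hp : 0 < p) (ht0 : 0 ≤ t) (ht1 : t < 1) : 0 < 1 - t ^ p :=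
  sub_pos.2 (rpow_lt_one ht0 ht1 hp)

theorem pWeight_pos {p t : ℝ} (hp : 0 < p) (ht0 : 0 ≤ t) (ht1 : t < 1) : 0 < pWeight p t :=
  rpow_pos_of_pos (one_sub_rpow_pos hp ht0 ht1) _

theorem pWeight_le_one_sub_rpow {p t : ℝ} (hp : 1 ≤ p) (ht0 : 0 ≤ t) (ht1 : t ≤ 1) :
    pWeight p t ≤ (1 - t) ^ (-1 / p) := by
  rcases ht1.eq_or_lt with rfl | ht1
  · simp [pWeight]
  have hexp : -1 / p ≤ 0 := div_nonpos_of_nonpos_of_nonneg (by norm_num) (by linarith)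
  exact rpow_le_rpow_of_nonpos (sub_pos.2 ht1) (by linarith [rpow_le_self_of_le_one ht0 ht1.le hp])
    hexp

theorem intervalIntegrable_pWeight {p y : ℝ} (hp : 1 < p) (hy0 : 0 ≤ y) (hy1 : y ≤ 1) :
    IntervalIntegrable (pWeight p) volume 0 y := by
  refine IntervalIntegrable.mono_set ?_ (uIcc_subset_uIcc left_mem_uIcc (mem_uIcc_of_le hy0 hy1))
  have hexp : (-1 : ℝ) < -1 / p := by
    rw [lt_div_iff₀ (by linarith)]
    linarith
  have hmajorant : IntervalIntegrable (fun t : ℝ => (1 - t) ^ (-1 / p)) volume 0 1 := by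
    simpa using
      (intervalIntegral.intervalIntegrable_rpow' hexp (a := 1 - 0) (b := 1 - 1)).comp_sub_left 1
  have hmeas : Measurable (pWeight p) := by unfold pWeight; fun_prop
  refine hmajorant.mono_fun' hmeas.aestronglyMeasurable ?_
  refine (ae_restrict_mem measurableSet_uIoc).mono fun t ht => ?_
  rw [uIoc_of_le zero_le_one] at ht
  have hnonneg : 0 ≤ pWeight p t :=
    rpow_nonneg (sub_nonneg.2 (rpow_le_one ht.1.le ht.2 (by linarith))) _
  change ‖pWeight p t‖ ≤ (1 - t) ^ (-1 / p)
  rw [norm_of_nonneg hnonneg]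
  exact pWeight_le_one_sub_rpow hp.le ht.1.le ht.2

theorem integral_pWeight {p : ℝ} (hp : 1 < p) :
    ∫ t in (0:ℝ)..1, pWeight p t = π / (p * sin (π / p)) := by
  have hp0 : 0 < p := one_pos.trans hp
  have hs1 : 1 / p < 1 := by rw [div_lt_one hp0]; exact hp
  calc ∫ t in (0:ℝ)..1, pWeight p t
      = ∫ t in Ioo (0:ℝ) 1,
          (p * t ^ (p - 1)) • ((1 / p) * ((t ^ p) ^ (1 / p - 1) * (1 - t ^ p) ^ (-(1 / p)))) := by
        rw [intervalIntegral.integral_of_le zero_le_one, integral_Ioc_eq_integral_Ioo]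
        refine setIntegral_congr_fun measurableSet_Ioo fun t ht => ?_
        have h1 : (t ^ p) ^ (1 / p - 1) = t ^ (1 - p) := by
          rw [← rpow_mul ht.1.le]
          congr 1
          field_simp
        have h2 : t ^ (p - 1) * t ^ (1 - p) = 1 := by
          rw [← rpow_add ht.1]
          norm_num
        rw [smul_eq_mul, h1, pWeight, neg_div]
        field_simp
        linear_combination (-(1 - t ^ p) ^ (-(1 / p))) * h2
    _ = 1 / p * ∫ u in (0:ℝ)..1, u ^ (1 / p - 1) * (1 - u) ^ (-(1 / p)) := by
        rw [integral_comp_rpow_Ioo_zero_one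
            (fun u => 1 / p * (u ^ (1 / p - 1) * (1 - u) ^ (-(1 / p)))) hp0,
          integral_const_mul, intervalIntegral.integral_of_le zero_le_one,
          integral_Ioc_eq_integral_Ioo]
    _ = π / (p * sin (π / p)) := by
        rw [integral_rpow_mul_one_sub_rpow_neg (by positivity) hs1]
        field_simp

theorem pWeight_lt_pWeight {p q t : ℝ} (hp : 0 < p) (hpq : p < q) (ht0 : 0 < t) (ht1 : t < 1) :
    pWeight q t < pWeight p t := by
  have hq : 0 < q := hp.trans hpq
  have hbase : 0 < 1 - t ^ p := one_sub_rpow_pos hp ht0.le ht1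
  have hexp : -1 / p < -1 / q := by
    rw [neg_div, neg_div, neg_lt_neg_iff]
    exact one_div_lt_one_div_of_lt hp hpq
  calc pWeight q t < (1 - t ^ p) ^ (-1 / q) :=
        rpow_lt_rpow_of_neg hbase (by linarith [rpow_lt_rpow_of_exponent_gt ht0 ht1 hpq])
          (div_neg_of_neg_of_pos (by norm_num) hq)
    _ < pWeight p t :=
        rpow_lt_rpow_of_exponent_gt hbase (by linarith [rpow_pos_of_pos ht0 p]) hexp

theorem hasDerivAt_log_one_sub_rpow_div {p t : ℝ} (hp : 0 < p) (ht0 : 0 < t) (ht1 : t < 1) :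
    HasDerivAt (fun t => log (1 - t ^ p) / p) (-(t ^ (p - 1) / (1 - t ^ p))) t := by
  have hbase := one_sub_rpow_pos hp ht0.le ht1
  refine ((((hasDerivAt_rpow_const (p := p) (Or.inl ht0.ne')).const_sub 1).log
    hbase.ne').div_const p).congr_deriv ?_
  field_simp

theorem rpow_sub_one_div_one_sub_rpow_lt {p q t : ℝ} (hp : 0 < p) (hpq : p < q) (ht0 : 0 < t)
    (ht1 : t < 1) : t ^ (q - 1) / (1 - t ^ q) < t ^ (p - 1) / (1 - t ^ p) := by
  have hp' : 0 < 1 - t ^ p := one_sub_rpow_pos hp ht0.le ht1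
  calc t ^ (q - 1) / (1 - t ^ q) ≤ t ^ (q - 1) / (1 - t ^ p) := by
        refine div_le_div_of_nonneg_left (rpow_nonneg ht0.le _) hp' ?_
        linarith [rpow_lt_rpow_of_exponent_gt ht0 ht1 hpq]
    _ < t ^ (p - 1) / (1 - t ^ p) := by
        gcongr
        exact rpow_lt_rpow_of_exponent_gt ht0 ht1 (by linarith)

theorem strictMonoOn_log_one_sub_rpow_div_sub {p q : ℝ} (hp : 0 < p) (hpq : p < q) :
    StrictMonoOn (fun t => log (1 - t ^ q) / q - log (1 - t ^ p) / p) (Ico 0 1) := by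
  have hq : 0 < q := hp.trans hpq
  have hcont : ∀ {s : ℝ}, 0 < s → ContinuousOn (fun t => log (1 - t ^ s) / s) (Ico 0 1) :=
    fun hs => ((continuousOn_const.sub (Real.continuous_rpow_const hs.le).continuousOn).log
      fun t ht => (one_sub_rpow_pos hs ht.1 ht.2).ne').div_const _
  refine strictMonoOn_of_deriv_pos (convex_Ico 0 1) ((hcont hq).sub (hcont hp)) fun t ht => ?_
  rw [interior_Ico] at ht
  have hderiv : HasDerivAt (fun t => log (1 - t ^ q) / q - log (1 - t ^ p) / p)
      (-(t ^ (q - 1) / (1 - t ^ q)) - -(t ^ (p - 1) / (1 - t ^ p))) t :=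
    (hasDerivAt_log_one_sub_rpow_div hq ht.1 ht.2).sub
      (hasDerivAt_log_one_sub_rpow_div hp ht.1 ht.2)
  rw [hderiv.deriv]
  linarith [rpow_sub_one_div_one_sub_rpow_lt hp hpq ht.1 ht.2]

theorem strictAntiOn_pWeight_div_pWeight {p q : ℝ} (hp : 0 < p) (hpq : p < q) :
    StrictAntiOn (fun t => pWeight q t / pWeight p t) (Ico 0 1) := by
  have hq : 0 < q := hp.trans hpq
  have hexp : ∀ t ∈ Ico (0:ℝ) 1, pWeight q t / pWeight p t =
      exp (-(log (1 - t ^ q) / q - log (1 - t ^ p) / p)) := by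
    intro t ht
    rw [pWeight, pWeight, rpow_def_of_pos (one_sub_rpow_pos hq ht.1 ht.2),
      rpow_def_of_pos (one_sub_rpow_pos hp ht.1 ht.2), ← exp_sub]
    ring_nf
  intro s hs t ht hst
  simp only [hexp s hs, hexp t ht, exp_lt_exp, neg_lt_neg_iff]
  exact strictMonoOn_log_one_sub_rpow_div_sub hp hpq hs ht hst

theorem pip_pos {p : ℝ} (hp : 1 < p) : 0 < pip p := by
  have hp0 : 0 < p := one_pos.trans hp
  have : 0 < sin (π / p) := sin_pos_of_pos_of_lt_pi (by positivity) (div_lt_self pi_pos hp)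
  unfold pip
  positivity

theorem pip_eq_two_mul_integral_pWeight {p : ℝ} (hp : 1 < p) :
    pip p = 2 * ∫ t in (0:ℝ)..1, pWeight p t := by
  rw [integral_pWeight hp, pip]
  ring

theorem integral_pWeight_pos {p y : ℝ} (hp : 1 < p) (hy0 : 0 < y) (hy1 : y ≤ 1) :
    0 < ∫ t in (0:ℝ)..y, pWeight p t :=
  intervalIntegral.intervalIntegral_pos_of_pos_on (intervalIntegrable_pWeight hp hy0.le hy1)
    (fun _ ht => pWeight_pos (one_pos.trans hp) ht.1.le (ht.2.trans_le hy1)) hy0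

theorem integral_pWeight_lt_integral_pWeight {p q y : ℝ} (hp : 1 < p) (hpq : p < q)
    (hy0 : 0 < y) (hy1 : y ≤ 1) :
    ∫ t in (0:ℝ)..y, pWeight q t < ∫ t in (0:ℝ)..y, pWeight p t := by
  have hint_p := intervalIntegrable_pWeight hp hy0.le hy1
  have hint_q := intervalIntegrable_pWeight (hp.trans hpq) hy0.le hy1
  have hpos := intervalIntegral.intervalIntegral_pos_of_pos_on (hint_p.sub hint_q)
    (fun t ht => sub_pos.2 (pWeight_lt_pWeight (one_pos.trans hp) hpq ht.1 (ht.2.trans_le hy1)))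
    hy0
  rw [intervalIntegral.integral_sub hint_p hint_q] at hpos
  linarith

theorem pip_mul_integral_pWeight_lt {p q y : ℝ} (hp : 1 < p) (hpq : p < q) (hy0 : 0 < y)
    (hy1 : y < 1) :
    pip q * ∫ t in (0:ℝ)..y, pWeight p t < pip p * ∫ t in (0:ℝ)..y, pWeight q t := by
  have hp0 : 0 < p := one_pos.trans hp
  have hq : 1 < q := hp.trans hpq
  rw [pip_eq_two_mul_integral_pWeight hp, pip_eq_two_mul_integral_pWeight hq]
  nlinarith [integral_mul_integral_lt_of_strictAntiOn_div hy0 hy1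
    (intervalIntegrable_pWeight hp zero_le_one le_rfl)
    (intervalIntegrable_pWeight hq zero_le_one le_rfl) (fun t ht => pWeight_pos hp0 ht.1.le ht.2)
    ((strictAntiOn_pWeight_div_pWeight hp0 hpq).mono Ioo_subset_Ico_self)]

theorem stmt_16 (p q y : ℝ) (hp : 1 < p) (hpq : p < q) (hy0 : 0 < y) (hy1 : y < 1) :
    1 < Ip q y / Ip p y ∧ Ip q y / Ip p y < pip p / pip q := by
  have hq : 1 < q := hp.trans hpq
  have hA := integral_pWeight_pos hp hy0 hy1.le
  have hpip_p := pip_pos hp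
  have hpip_q := pip_pos hq
  have hratio : Ip q y / Ip p y =
      pip p * (∫ t in (0:ℝ)..y, pWeight q t) / (pip q * ∫ t in (0:ℝ)..y, pWeight p t) := by
    change 2 / pip q * (∫ t in (0:ℝ)..y, pWeight q t) /
      (2 / pip p * ∫ t in (0:ℝ)..y, pWeight p t) = _
    field_simp
  rw [hratio, one_lt_div (by positivity), div_lt_div_iff₀ (by positivity) hpip_q]
  refine ⟨pip_mul_integral_pWeight_lt hp hpq hy0 hy1, ?_⟩
  nlinarith [integral_pWeight_lt_integral_pWeight hp hpq hy0 hy1.le, mul_pos hpip_p hpip_q]
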